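/- For the one-dimensional MCP function |·|_α(t) = |t| − env_α|·|(t) and parameters 0 < β < α, the proximity operator prox_{β|·|_α}(x) equals x when |x| > α, and equals sgn(x)·(α/(α−β))·max{|x|−β, 0} when |x| ≤ α; in particular it is single-valued and continuous for β < α. -/

import Mathlib

/-- Moreau envelope of a real function with parameter `α`. -/
noncomputable def moreauEnvR (α : ℝ) (p : ℝ → ℝ) (x : ℝ) : ℝ :=
  ⨅ w : ℝ, p w + (1 / (2 * α)) * (w - x) ^ 2

/-- The set of minimizers defining the (possibly set-valued) proximity operator
of `g : ℝ → ℝ` with index `β` at `x`. -/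
def proxSetR (β : ℝ) (g : ℝ → ℝ) (x : ℝ) : Set ℝ :=
  {w | ∀ u : ℝ, g w + (1 / (2 * β)) * (w - x) ^ 2 ≤ g u + (1 / (2 * β)) * (u - x) ^ 2}

/-! Since the Moreau envelope of `|·|` is the Huber function, `g = |·|_α` makes
`g + (·)²/(2α)` convex (it is `|·|` plus a supremum of affine functions), so the prox objective
`g u + (u - x)²/(2β)` is strongly convex with modulus `1/β - 1/α > 0`. Exhibiting the subgradient
`x/β - (1/β - 1/α) p` of `g + (·)²/(2α)` at the claimed point `p` therefore shows that the
objective grows quadratically away from `p`, so `p` is its unique minimizer. In the regimes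
`|x| ≤ β`, `β < |x| ≤ α` and `α < |x|` this subgradient is `x/β`, `sign x` and `x/α`. -/

open Set

lemma moreauEnvR_le {α : ℝ} {p : ℝ → ℝ} (hα : 0 ≤ α) (hp : BddBelow (range p)) (x w : ℝ) :
    moreauEnvR α p x ≤ p w + 1 / (2 * α) * (w - x) ^ 2 := by
  obtain ⟨m, hm⟩ := hp
  refine ciInf_le ⟨m, ?_⟩ w
  rintro _ ⟨v, rfl⟩
  have hquad : 0 ≤ 1 / (2 * α) * (v - x) ^ 2 := by positivity
  linarith [hm (mem_range_self v)]

lemma proxSetR_eq_singleton_of_quadratic_growth {β c x p : ℝ} {g : ℝ → ℝ} (hc : 0 < c)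
    (hgrowth : ∀ u, g p + 1 / (2 * β) * (p - x) ^ 2 + c * (u - p) ^ 2
      ≤ g u + 1 / (2 * β) * (u - x) ^ 2) :
    proxSetR β g x = {p} := by
  refine eq_singleton_iff_unique_mem.2 ⟨fun u => ?_, fun w hw => ?_⟩
  · linarith [hgrowth u, mul_nonneg hc.le (sq_nonneg (u - p))]
  · have hsq : c * (w - p) ^ 2 ≤ 0 := by linarith [hw p, hgrowth w]
    have : (w - p) ^ 2 = 0 := le_antisymm (nonpos_of_mul_nonpos_right hsq hc) (sq_nonneg _)
    linarith [pow_eq_zero_iff two_ne_zero |>.1 this]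

lemma prox_quadratic_growth_of_subgradient {α β x p : ℝ} {g : ℝ → ℝ}
    (hsub : ∀ u, g p + p ^ 2 / (2 * α) + (x / β - (1 / β - 1 / α) * p) * (u - p)
      ≤ g u + u ^ 2 / (2 * α)) (u : ℝ) :
    g p + 1 / (2 * β) * (p - x) ^ 2 + (1 / (2 * β) - 1 / (2 * α)) * (u - p) ^ 2
      ≤ g u + 1 / (2 * β) * (u - x) ^ 2 := by
  linear_combination hsub u

noncomputable def huber (α x : ℝ) : ℝ := if |x| ≤ α then x ^ 2 / (2 * α) else |x| - α / 2

lemma huber_neg (α x : ℝ) : huber α (-x) = huber α x := by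
  simp [huber]

lemma huber_le_abs_add_sq {α : ℝ} (hα : 0 < α) (x w : ℝ) :
    huber α x ≤ |w| + 1 / (2 * α) * (w - x) ^ 2 := by
  have hwx : w * x ≤ |w| * |x| := by rw [← abs_mul]; exact le_abs_self _
  have h2α : 0 < 2 * α := by positivity
  rw [huber]
  split_ifs with h
  · rw [div_le_iff₀ h2α]
    field_simp
    nlinarith [sq_nonneg w, abs_nonneg w, mul_le_mul_of_nonneg_left h (abs_nonneg w)]
  · field_simp
    nlinarith [sq_nonneg (|x| - |w| - α), sq_abs w, sq_abs x]

lemma moreauEnvR_abs {α : ℝ} (hα : 0 < α) (x : ℝ) :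
    moreauEnvR α (fun s => |s|) x = huber α x := by
  refine le_antisymm ?_ (le_ciInf fun w => huber_le_abs_add_sq hα x w)
  have hbdd : BddBelow (range fun s : ℝ => |s|) := ⟨0, by rintro _ ⟨s, rfl⟩; exact abs_nonneg s⟩
  rw [huber]
  split_ifs with h
  · calc moreauEnvR α (fun s => |s|) x ≤ |0| + 1 / (2 * α) * (0 - x) ^ 2 :=
          moreauEnvR_le hα.le hbdd x 0
      _ = x ^ 2 / (2 * α) := by simp; ring
  · obtain ⟨w, hw, hwx⟩ : ∃ w, |w| = |x| - α ∧ (w - x) ^ 2 = α ^ 2 := by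
      rcases le_or_gt 0 x with hx | hx
      · refine ⟨x - α, ?_, by ring⟩
        rw [abs_of_nonneg hx] at h ⊢
        exact abs_of_nonneg (by linarith)
      · refine ⟨x + α, ?_, by ring⟩
        rw [abs_of_neg hx] at h ⊢
        rw [abs_of_neg (by linarith)]; ring
    calc moreauEnvR α (fun s => |s|) x ≤ |w| + 1 / (2 * α) * (w - x) ^ 2 :=
          moreauEnvR_le hα.le hbdd x w
      _ = |x| - α / 2 := by rw [hw, hwx]; field_simp; ring

noncomputable def mcpProx (α β x : ℝ) : ℝ :=
  if |x| ≤ α then Real.sign x * (α / (α - β)) * max (|x| - β) 0 else x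

lemma mcpProx_neg (α β x : ℝ) : mcpProx α β (-x) = -mcpProx α β x := by
  unfold mcpProx
  rw [abs_neg, Real.sign_neg]
  split_ifs <;> ring

lemma mcp_subgradient_of_nonneg {α β x : ℝ} (hβ : 0 < β) (hβα : β < α) (hx : 0 ≤ x) (u : ℝ) :
    |mcpProx α β x| - huber α (mcpProx α β x) + mcpProx α β x ^ 2 / (2 * α)
      + (x / β - (1 / β - 1 / α) * mcpProx α β x) * (u - mcpProx α β x)
      ≤ |u| - huber α u + u ^ 2 / (2 * α) := by
  have hα : 0 < α := hβ.trans hβα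
  have hu : huber α u ≤ u ^ 2 / (2 * α) := by
    linear_combination huber_le_abs_add_sq hα u 0
  rcases le_or_gt x β with hxβ | hxβ
  · have hp : mcpProx α β x = 0 := by
      rw [mcpProx, abs_of_nonneg hx, if_pos (by linarith), max_eq_right (by linarith), mul_zero]
    have h0 : huber α 0 = 0 := by simp [huber, hα.le]
    have hs : x / β * u ≤ |u| := by
      have hs0 : 0 ≤ x / β := by positivity
      have hs1 : x / β ≤ 1 := (div_le_one hβ).2 hxβ
      nlinarith [le_abs_self u, abs_nonneg u]
    rw [hp, h0]
    linear_combination hs + hu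
  rcases le_or_gt x α with hxα | hxα
  · set p := α / (α - β) * (x - β) with hp_def
    have hp : mcpProx α β x = p := by
      rw [mcpProx, abs_of_nonneg hx, if_pos hxα, Real.sign_of_pos (hβ.trans hxβ),
        max_eq_left (by linarith)]
      ring
    have hαβ : 0 < α - β := by linarith
    have hp0 : 0 ≤ p := mul_nonneg (by positivity) (by linarith)
    have hpα : p ≤ α := by
      rw [hp_def, div_mul_eq_mul_div, div_le_iff₀ hαβ]
      nlinarith
    have hs : x / β - (1 / β - 1 / α) * p = 1 := by
      rw [hp_def]; field_simp; ring
    rw [hp, hs, huber, if_pos (by rwa [abs_of_nonneg hp0]), abs_of_nonneg hp0]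
    linear_combination le_abs_self u + hu
  · have hp : mcpProx α β x = x := by rw [mcpProx, if_neg (by rw [abs_of_nonneg hx]; linarith)]
    have hs : x / β - (1 / β - 1 / α) * x = x / α := by field_simp; ring
    -- the tangent of `u ↦ u²/(2α) - huber α u` at `x` is supplied by the envelope's point `x - α`
    have hux := huber_le_abs_add_sq hα u (x - α)
    have hsq : 1 / (2 * α) * (x - α - u) ^ 2 = (x - u) ^ 2 / (2 * α) - (x - u) + α / 2 := by
      field_simp; ring
    rw [abs_of_nonneg (by linarith : 0 ≤ x - α), hsq] at hux
    rw [hp, hs, huber, if_neg (by rw [abs_of_nonneg hx]; linarith), abs_of_nonneg hx]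
    linear_combination le_abs_self u + hux

lemma mcp_subgradient {α β : ℝ} (hβ : 0 < β) (hβα : β < α) (x u : ℝ) :
    |mcpProx α β x| - huber α (mcpProx α β x) + mcpProx α β x ^ 2 / (2 * α)
      + (x / β - (1 / β - 1 / α) * mcpProx α β x) * (u - mcpProx α β x)
      ≤ |u| - huber α u + u ^ 2 / (2 * α) := by
  rcases le_or_gt 0 x with hx | hx
  · exact mcp_subgradient_of_nonneg hβ hβα hx u
  · have h := mcp_subgradient_of_nonneg hβ hβα (neg_nonneg.2 hx.le) (-u)
    simp only [mcpProx_neg, huber_neg, abs_neg, neg_sq] at h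
    linear_combination h

lemma sign_mul_max_abs_sub {β : ℝ} (hβ : 0 ≤ β) (x : ℝ) :
    Real.sign x * max (|x| - β) 0 = max (x - β) 0 - max (-x - β) 0 := by
  rcases lt_trichotomy x 0 with hx | rfl | hx
  · rw [Real.sign_of_neg hx, abs_of_neg hx, max_eq_right (by linarith : x - β ≤ 0)]
    ring
  · simp [hβ]
  · rw [Real.sign_of_pos hx, abs_of_pos hx, max_eq_right (by linarith : -x - β ≤ 0)]
    ring

lemma continuous_mcpProx {α β : ℝ} (hβ : 0 ≤ β) (hβα : β < α) : Continuous (mcpProx α β) := by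
  have hsoft : Continuous fun x : ℝ => Real.sign x * (α / (α - β)) * max (|x| - β) 0 := by
    simp_rw [mul_right_comm _ (α / (α - β)), sign_mul_max_abs_sub hβ]
    fun_prop
  refine hsoft.if_le continuous_id continuous_abs continuous_const fun x hx => ?_
  have hαβ : α - β ≠ 0 := by linarith
  rcases abs_eq (hβ.trans hβα.le) |>.1 hx with rfl | rfl
  · rw [hx, Real.sign_of_pos (by linarith), max_eq_left (by linarith)]
    field_simp
  · rw [hx, Real.sign_of_neg (by linarith), max_eq_left (by linarith)]
    field_simp

theorem stmt_19 (α β : ℝ) (hβ : 0 < β) (hβα : β < α) :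
    (∀ x : ℝ, proxSetR β (fun t => |t| - moreauEnvR α (fun s => |s|) t) x =
      {if |x| ≤ α then Real.sign x * (α / (α - β)) * max (|x| - β) 0 else x}) ∧
    Continuous (fun x : ℝ =>
      if |x| ≤ α then Real.sign x * (α / (α - β)) * max (|x| - β) 0 else x) := by
  have hα : 0 < α := hβ.trans hβα
  refine ⟨fun x => ?_, continuous_mcpProx hβ.le hβα⟩
  simp_rw [moreauEnvR_abs hα]
  have hc : 0 < 1 / (2 * β) - 1 / (2 * α) := by
    rw [sub_pos]; gcongr
  exact proxSetR_eq_singleton_of_quadratic_growth hc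
    (prox_quadratic_growth_of_subgradient (g := fun t => |t| - huber α t)
      (mcp_subgradient hβ hβα x))
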